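/- arXiv:2406.03286 — 2 statements merged into one kernel-verified Lean document; each statement's English description precedes it below -/
import Mathlib

section
/- Fix τ > 0 and μ ∈ (0,1]. Let x(·) be a solution of the linear balanced multiagent system driven by a signal A(·) ∈ G_{λ₂}(τ,μ) with V(x(0)) > 0. Then the variance decreases strictly over every time window of length τ: V(x(t+τ)) < V(x(t)) for all t ≥ 0. -/
open MeasureTheory Finset

noncomputable section

/-- Diameter of a configuration of `N` agents in `ℝ^d`. -/
def mDiam {N d : ℕ} (x : Fin N → EuclideanSpace ℝ (Fin d)) : ℝ :=
  ⨆ i : Fin N, ⨆ j : Fin N, ‖x i - x j‖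

/-- Variance of a configuration of `N` agents in `ℝ^d`. -/
def mVar {N d : ℕ} (x : Fin N → EuclideanSpace ℝ (Fin d)) : ℝ :=
  (N : ℝ)⁻¹ * ∑ i : Fin N, ‖x i - (N : ℝ)⁻¹ • ∑ k : Fin N, x k‖ ^ 2

/-- Admissible interaction signals: measurable, valued in `[0,1]` on `[0,∞)`. -/
def ValidSignal (N : ℕ) (a : Fin N → Fin N → ℝ → ℝ) : Prop :=
  ∀ i j, Measurable (a i j) ∧ ∀ t : ℝ, 0 ≤ t → a i j t ∈ Set.Icc (0 : ℝ) 1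

/-- Admissible kernels: locally Lipschitz and positive on `[0,∞)`. -/
def ValidKernel (φ : ℝ → ℝ) : Prop :=
  LocallyLipschitz φ ∧ ∀ r : ℝ, 0 ≤ r → 0 < φ r

/-- Solutions of the nonlinear multiagent system
`ẋ_i(t) = (1/N) ∑_j a_{ij}(t) φ(|x_i(t) − x_j(t)|)(x_j(t) − x_i(t))` for a.e. `t ≥ 0`,
as locally Lipschitz curves on `[0,∞)`. -/
def IsMASol {N d : ℕ} (a : Fin N → Fin N → ℝ → ℝ) (φ : ℝ → ℝ)
    (x : Fin N → ℝ → EuclideanSpace ℝ (Fin d)) : Prop :=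
  (∀ i, ∀ r : ℝ, 0 < r → ∃ K : NNReal, LipschitzOnWith K (x i) (Set.Icc 0 r)) ∧
  (∀ᵐ t ∂(volume : Measure ℝ), 0 ≤ t → ∀ i, HasDerivAt (x i)
    ((N : ℝ)⁻¹ • ∑ j : Fin N, (a i j t * φ ‖x i t - x j t‖) • (x j t - x i t)) t)

/-- The scrambling coefficient of an `N × N` matrix. -/
def scrambling {N : ℕ} (A : Fin N → Fin N → ℝ) : ℝ :=
  ⨅ i : Fin N, ⨅ j : Fin N, (N : ℝ)⁻¹ * ∑ k : Fin N, min (A i k) (A j k)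

/-- Scrambling-persistent signals: the scrambling coefficient of the averaged matrix
over every window `[t, t+τ]` is at least `μ`. -/
def ScramblingPersistent (N : ℕ) (τ μ : ℝ) (a : Fin N → Fin N → ℝ → ℝ) : Prop :=
  ValidSignal N a ∧
  ∀ t : ℝ, 0 ≤ t → μ ≤ scrambling (fun i j => τ⁻¹ * ∫ s in t..t + τ, a i j s)

/-- A matrix is balanced if its in- and out-degrees coincide. -/
def IsBalanced {N : ℕ} (A : Fin N → Fin N → ℝ) : Prop :=
  ∀ i, ∑ j : Fin N, A i j = ∑ j : Fin N, A j i

/-- The algebraic connectivity of a (balanced) matrix: the largest `λ` such that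
`(1/(2N²)) ∑_{ij} a_{ij} |x_i − x_j|² ≥ λ V(x)` for all configurations `x`. -/
def lambda2 (d : ℕ) {N : ℕ} (A : Fin N → Fin N → ℝ) : ℝ :=
  sSup {lam : ℝ | ∀ x : Fin N → EuclideanSpace ℝ (Fin d),
    lam * mVar x ≤ (2 * (N : ℝ) ^ 2)⁻¹ * ∑ i : Fin N, ∑ j : Fin N, A i j * ‖x i - x j‖ ^ 2}

/-- Connectivity-persistent balanced signals. -/
def ConnectivityPersistent (N d : ℕ) (τ μ : ℝ) (a : Fin N → Fin N → ℝ → ℝ) : Prop :=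
  ValidSignal N a ∧
  (∀ᵐ t ∂(volume : Measure ℝ), 0 ≤ t → IsBalanced (fun i j => a i j t)) ∧
  ∀ t : ℝ, 0 ≤ t → μ ≤ lambda2 d (fun i j => τ⁻¹ * ∫ s in t..t + τ, a i j s)

/-- Solutions of the linear multiagent system
`ẋ_i(t) = (1/N) ∑_j a_{ij}(t) (x_j(t) − x_i(t))` for a.e. `t ≥ 0`. -/
def IsLinSol {N d : ℕ} (a : Fin N → Fin N → ℝ → ℝ)
    (x : Fin N → ℝ → EuclideanSpace ℝ (Fin d)) : Prop :=
  (∀ i, ∀ r : ℝ, 0 < r → ∃ K : NNReal, LipschitzOnWith K (x i) (Set.Icc 0 r)) ∧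
  (∀ᵐ t ∂(volume : Measure ℝ), 0 ≤ t → ∀ i, HasDerivAt (x i)
    ((N : ℝ)⁻¹ • ∑ j : Fin N, a i j t • (x j t - x i t)) t)

/-!
Along a solution driven by a balanced signal, the variance `V(t)` obeys the dissipation identity
`V' = -N⁻² ∑ᵢⱼ aᵢⱼ |xᵢ - xⱼ|²` almost everywhere, and `V` is locally Lipschitz, hence absolutely
continuous, so `V(t) - V(t + τ)` is `N⁻²` times the integral of this Dirichlet energy over the
window. The energy is at most `4N²V`, so the variance halves at worst over steps of length `1/8`
and never vanishes. If the integral over a window were zero, all velocities would vanish a.e. on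
it, the configuration would stay frozen at `x(t)`, and the window-averaged matrix would have zero
Dirichlet energy at a configuration of positive variance, forcing `λ₂ ≤ 0 < μ`.
-/

open Set Filter
open scoped NNReal RealInnerProductSpace

theorem LipschitzOnWith.pi {α ι : Type*} [PseudoEMetricSpace α] [Fintype ι]
    {β : ι → Type*} [∀ i, PseudoEMetricSpace (β i)] {f : ∀ i, α → β i} {K : ι → ℝ≥0}
    {s : Set α} (hf : ∀ i, LipschitzOnWith (K i) (f i) s) :
    LipschitzOnWith (∑ i, K i) (fun y i => f i y) s := by
  intro y hy z hz
  refine (edist_pi_le_iff.2 fun i => ?_)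
  calc edist (f i y) (f i z) ≤ K i * edist y z := hf i hy hz
    _ ≤ (∑ i, K i : ℝ≥0) * edist y z := by
      gcongr
      exact Finset.single_le_sum (f := K) (fun j _ => bot_le) (Finset.mem_univ i)

theorem ContDiff.exists_lipschitzOnWith_comp {α E F : Type*} [PseudoMetricSpace α]
    [NormedAddCommGroup E] [NormedSpace ℝ E] [NormedAddCommGroup F] [NormedSpace ℝ F]
    {g : E → F} (hg : ContDiff ℝ 1 g) {f : α → E} {s : Set α} (hs : IsCompact s) {K : ℝ≥0}
    (hf : LipschitzOnWith K f s) : ∃ L, LipschitzOnWith L (g ∘ f) s := by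
  obtain ⟨L, hL⟩ := hg.locallyLipschitz.locallyLipschitzOn.exists_lipschitzOnWith_of_compact
    (hs.image_of_continuousOn hf.continuousOn)
  exact ⟨L * K, hL.comp hf (mapsTo_image f s)⟩

theorem AbsolutelyContinuousOnInterval.integral_eq_sub_of_ae_hasDerivAt {f f' : ℝ → ℝ}
    {a b : ℝ} (hf : AbsolutelyContinuousOnInterval f a b)
    (hf' : ∀ᵐ x, x ∈ uIcc a b → HasDerivAt f (f' x) x) :
    ∫ x in a..b, f' x = f b - f a := by
  rw [← hf.integral_deriv_eq_sub]
  refine intervalIntegral.integral_congr_ae ?_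
  filter_upwards [hf'] with x hx hxab using (hx (uIoc_subset_uIcc hxab)).deriv.symm

theorem AbsolutelyContinuousOnInterval.intervalIntegrable_of_ae_hasDerivAt {f f' : ℝ → ℝ}
    {a b : ℝ} (hf : AbsolutelyContinuousOnInterval f a b)
    (hf' : ∀ᵐ x, x ∈ uIcc a b → HasDerivAt f (f' x) x) :
    IntervalIntegrable f' volume a b := by
  refine hf.intervalIntegrable_deriv.congr_ae ?_
  rw [EventuallyEq, ae_restrict_iff' measurableSet_uIoc]
  filter_upwards [hf'] with x hx hxab using (hx (uIoc_subset_uIcc hxab)).deriv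

theorem pos_of_pos_of_step {V : ℝ → ℝ} {δ : ℝ} (hδ : 0 < δ) (h0 : 0 < V 0)
    (hstep : ∀ s, 0 ≤ s → 0 < V s → ∀ u ∈ Icc s (s + δ), 0 < V u) :
    ∀ t, 0 ≤ t → 0 < V t := by
  have key : ∀ n : ℕ, ∀ t ∈ Icc 0 (n * δ), 0 < V t := by
    intro n
    induction n with
    | zero =>
      intro t ⟨ht0, ht⟩
      rw [Nat.cast_zero, zero_mul] at ht
      rwa [le_antisymm ht ht0]
    | succ n ih =>
      intro t ⟨ht0, ht⟩
      by_cases htn : t ≤ n * δ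
      · exact ih t ⟨ht0, htn⟩
      have hn : 0 ≤ (n : ℝ) * δ := by positivity
      refine hstep _ hn (ih _ ⟨hn, le_rfl⟩) t ⟨(not_le.1 htn).le, ?_⟩
      push_cast at ht
      linarith
  intro t ht
  obtain ⟨n, hn⟩ := exists_nat_ge (t / δ)
  exact key n t ⟨ht, (div_le_iff₀ hδ).1 hn⟩

def dirichletEnergy {N : ℕ} {E : Type*} [SeminormedAddCommGroup E] (A : Fin N → Fin N → ℝ)
    (x : Fin N → E) : ℝ :=
  ∑ i, ∑ j, A i j * ‖x i - x j‖ ^ 2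

section Configuration

variable {N : ℕ}

theorem dirichletEnergy_nonneg {E : Type*} [SeminormedAddCommGroup E] {A : Fin N → Fin N → ℝ}
    (hA : ∀ i j, 0 ≤ A i j) (x : Fin N → E) : 0 ≤ dirichletEnergy A x :=
  sum_nonneg fun i _ => sum_nonneg fun j _ => mul_nonneg (hA i j) (by positivity)

theorem dirichletEnergy_eq_zero_iff {E : Type*} [SeminormedAddCommGroup E]
    {A : Fin N → Fin N → ℝ} (hA : ∀ i j, 0 ≤ A i j) (x : Fin N → E) :
    dirichletEnergy A x = 0 ↔ ∀ i j, A i j * ‖x i - x j‖ ^ 2 = 0 := by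
  have hterm : ∀ i j, 0 ≤ A i j * ‖x i - x j‖ ^ 2 := fun i j => mul_nonneg (hA i j) (by positivity)
  simp only [dirichletEnergy, sum_eq_zero_iff_of_nonneg fun i _ => sum_nonneg fun j _ => hterm i j,
    sum_eq_zero_iff_of_nonneg fun j _ => hterm _ j, Finset.mem_univ, true_implies]

theorem smul_sub_eq_zero_of_dirichletEnergy_eq_zero {E : Type*} [NormedAddCommGroup E]
    [Module ℝ E] {A : Fin N → Fin N → ℝ} (hA : ∀ i j, 0 ≤ A i j) {x : Fin N → E}
    (h : dirichletEnergy A x = 0) (i j : Fin N) : A i j • (x j - x i) = 0 := by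
  rcases mul_eq_zero.1 ((dirichletEnergy_eq_zero_iff hA x).1 h i j) with hA0 | hx0
  · rw [hA0, zero_smul]
  · rw [← neg_sub, norm_eq_zero.1 (pow_eq_zero_iff two_ne_zero |>.1 hx0), neg_zero, smul_zero]

theorem dirichletEnergy_le_four_mul_mVar {d : ℕ} {A : Fin N → Fin N → ℝ}
    (hA : ∀ i j, A i j ≤ 1) (x : Fin N → EuclideanSpace ℝ (Fin d)) :
    dirichletEnergy A x ≤ 4 * N ^ 2 * mVar x := by
  set m := (N : ℝ)⁻¹ • ∑ k, x k
  have hterm : ∀ i j, A i j * ‖x i - x j‖ ^ 2 ≤ 2 * ‖x i - m‖ ^ 2 + 2 * ‖x j - m‖ ^ 2 := by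
    intro i j
    have htri : ‖x i - x j‖ ≤ ‖x i - m‖ + ‖x j - m‖ := by
      simpa only [norm_sub_rev m] using norm_sub_le_norm_sub_add_norm_sub (x i) m (x j)
    calc A i j * ‖x i - x j‖ ^ 2 ≤ 1 * ‖x i - x j‖ ^ 2 := by gcongr; exact hA i j
      _ ≤ 2 * ‖x i - m‖ ^ 2 + 2 * ‖x j - m‖ ^ 2 := by
        nlinarith [norm_nonneg (x i - x j), sq_nonneg (‖x i - m‖ - ‖x j - m‖)]
  calc dirichletEnergy A x ≤ ∑ i : Fin N, ∑ j : Fin N, (2 * ‖x i - m‖ ^ 2 + 2 * ‖x j - m‖ ^ 2) :=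
        sum_le_sum fun i _ => sum_le_sum fun j _ => hterm i j
    _ = 4 * N * ∑ i, ‖x i - m‖ ^ 2 := by
        simp only [sum_add_distrib, ← mul_sum, sum_const, card_univ, Fintype.card_fin,
          nsmul_eq_mul]
        ring
    _ = 4 * N ^ 2 * mVar x := by
        rw [mVar, sq, mul_assoc, mul_assoc (4 : ℝ) (N * N), ← mul_assoc (N * N : ℝ),
          mul_self_mul_inv]

theorem lambda2_nonpos_of_dirichletEnergy_eq_zero {d : ℕ} {A : Fin N → Fin N → ℝ}
    {x : Fin N → EuclideanSpace ℝ (Fin d)} (hx : 0 < mVar x) (hA : dirichletEnergy A x = 0) :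
    lambda2 d A ≤ 0 := by
  refine Real.sSup_nonpos fun lam hlam => ?_
  have := hlam x
  rw [show ∑ i, ∑ j, A i j * ‖x i - x j‖ ^ 2 = 0 from hA, mul_zero] at this
  exact nonpos_of_mul_nonpos_left this hx

theorem IsBalanced.sum_sum_smul_swap {A : Fin N → Fin N → ℝ} (hA : IsBalanced A) {M : Type*}
    [AddCommMonoid M] [Module ℝ M] (c : Fin N → M) :
    ∑ i, ∑ j, A i j • c j = ∑ i, ∑ j, A i j • c i := by
  rw [sum_comm]
  simp only [← sum_smul]
  exact sum_congr rfl fun j _ => by rw [hA j]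

theorem IsBalanced.sum_sum_smul_sub_eq_zero {A : Fin N → Fin N → ℝ} (hA : IsBalanced A)
    {M : Type*} [AddCommGroup M] [Module ℝ M] (p : Fin N → M) :
    ∑ i, ∑ j, A i j • (p j - p i) = 0 := by
  simp only [smul_sub, sum_sub_distrib, hA.sum_sum_smul_swap, sub_self]

theorem IsBalanced.two_mul_sum_inner_sum_smul_sub {A : Fin N → Fin N → ℝ} (hA : IsBalanced A)
    {F : Type*} [NormedAddCommGroup F] [InnerProductSpace ℝ F] (p : Fin N → F) (c : F) :
    2 * ∑ i, ⟪p i - c, ∑ j, A i j • (p j - p i)⟫ = -dirichletEnergy A p := by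
  have hc : ∑ i, ⟪c, ∑ j, A i j • (p j - p i)⟫ = 0 := by
    rw [← inner_sum, hA.sum_sum_smul_sub_eq_zero, inner_zero_right]
  have hterm : ∀ i j, 2 * ⟪p i, A i j • (p j - p i)⟫ =
      A i j * ‖p j‖ ^ 2 - A i j * ‖p i‖ ^ 2 - A i j * ‖p i - p j‖ ^ 2 := by
    intro i j
    rw [real_inner_smul_right, inner_sub_right, real_inner_self_eq_norm_sq, norm_sub_sq_real]
    ring
  have hswap := hA.sum_sum_smul_swap fun i => ‖p i‖ ^ 2
  simp only [smul_eq_mul] at hswap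
  simp only [inner_sub_left, sum_sub_distrib]
  rw [hc, sub_zero]
  simp only [inner_sum, mul_sum, hterm, sum_sub_distrib, hswap, sub_self, zero_sub]
  rfl

end Configuration

section Dynamics

variable {N d : ℕ}

theorem contDiff_mVar : ContDiff ℝ 1 (mVar (N := N) (d := d)) := by
  unfold mVar
  exact contDiff_const.mul (ContDiff.sum fun i _ => (by fun_prop : ContDiff ℝ 1 _).norm_sq ℝ)

theorem hasDerivAt_mVar {x : Fin N → ℝ → EuclideanSpace ℝ (Fin d)}
    {v : Fin N → EuclideanSpace ℝ (Fin d)} {t : ℝ} (hx : ∀ i, HasDerivAt (x i) (v i) t)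
    (hv : ∑ i, v i = 0) :
    HasDerivAt (fun s => mVar fun i => x i s)
      ((N : ℝ)⁻¹ * ∑ i, 2 * ⟪x i t - (N : ℝ)⁻¹ • ∑ k, x k t, v i⟫) t := by
  have hmean : HasDerivAt (fun s => (N : ℝ)⁻¹ • ∑ k, x k s) 0 t := by
    have := (HasDerivAt.fun_sum (u := univ) fun k _ => hx k).const_smul (N : ℝ)⁻¹
    rwa [hv, smul_zero] at this
  have hsum := HasDerivAt.fun_sum (u := univ) fun i _ => ((hx i).sub hmean).norm_sq
  have hvar := hsum.const_mul (N : ℝ)⁻¹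
  simp only [Pi.sub_apply, sub_zero] at hvar
  exact hvar

theorem dirichletEnergy_const_mul_integral_eq_zero {E : Type*} [SeminormedAddCommGroup E]
    {a : Fin N → Fin N → ℝ → ℝ} {y : Fin N → E} {t₁ t₂ : ℝ}
    (c : ℝ) (h₁₂ : t₁ ≤ t₂) (ha : ∀ i j, ∀ s ∈ Ioc t₁ t₂, 0 ≤ a i j s)
    (h : ∀ᵐ s ∂volume.restrict (Ioc t₁ t₂), dirichletEnergy (fun i j => a i j s) y = 0) :
    dirichletEnergy (fun i j => c * ∫ s in t₁..t₂, a i j s) y = 0 := by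
  refine sum_eq_zero fun i _ => sum_eq_zero fun j _ => ?_
  have hij : ∀ᵐ s ∂volume.restrict (Ioc t₁ t₂), a i j s * ‖y i - y j‖ ^ 2 = 0 := by
    filter_upwards [h, ae_restrict_mem measurableSet_Ioc] with s hs hmem
    exact (dirichletEnergy_eq_zero_iff (fun i j => ha i j s hmem) y).1 hs i j
  rw [mul_assoc, ← intervalIntegral.integral_mul_const, intervalIntegral.integral_of_le h₁₂,
    integral_eq_zero_of_ae hij, mul_zero]

variable {a : Fin N → Fin N → ℝ → ℝ} {x : Fin N → ℝ → EuclideanSpace ℝ (Fin d)}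

theorem IsLinSol.ae_hasDerivAt_mVar (hx : IsLinSol a x)
    (hbal : ∀ᵐ t, 0 ≤ t → IsBalanced fun i j => a i j t) :
    ∀ᵐ t, 0 ≤ t → HasDerivAt (fun s => mVar fun i => x i s)
      (-(N : ℝ)⁻¹ ^ 2 * dirichletEnergy (fun i j => a i j t) fun i => x i t) t := by
  filter_upwards [hx.2, hbal] with t hderiv hbal ht
  have hb := hbal ht
  convert hasDerivAt_mVar (hderiv ht) ?_ using 1
  · rw [neg_mul, ← mul_neg, ← hb.two_mul_sum_inner_sum_smul_sub _ ((N : ℝ)⁻¹ • ∑ k, x k t)]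
    simp only [real_inner_smul_right, mul_sum]
    exact sum_congr rfl fun i _ => by ring
  · rw [← smul_sum, hb.sum_sum_smul_sub_eq_zero, smul_zero]

theorem IsLinSol.absolutelyContinuousOnInterval_mVar (hx : IsLinSol a x) {t₁ t₂ : ℝ}
    (h₁ : 0 ≤ t₁) (h₂ : 0 ≤ t₂) :
    AbsolutelyContinuousOnInterval (fun t => mVar fun i => x i t) t₁ t₂ := by
  have hr : 0 < max t₁ t₂ + 1 := by positivity
  choose K hK using fun i => hx.1 i _ hr
  obtain ⟨L, hL⟩ :=
    contDiff_mVar.exists_lipschitzOnWith_comp isCompact_Icc (LipschitzOnWith.pi hK)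
  refine (hL.mono (uIcc_subset_Icc ⟨h₁, ?_⟩ ⟨h₂, ?_⟩)).absolutelyContinuousOnInterval <;>
    linarith [le_max_left t₁ t₂, le_max_right t₁ t₂]

theorem IsLinSol.mVar_sub_mVar (hx : IsLinSol a x)
    (hbal : ∀ᵐ t, 0 ≤ t → IsBalanced fun i j => a i j t) {t₁ t₂ : ℝ} (h₁ : 0 ≤ t₁)
    (h₂ : 0 ≤ t₂) :
    (mVar fun i => x i t₁) - (mVar fun i => x i t₂) =
      (N : ℝ)⁻¹ ^ 2 * ∫ s in t₁..t₂, dirichletEnergy (fun i j => a i j s) fun i => x i s := by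
  have hftc := (hx.absolutelyContinuousOnInterval_mVar h₁ h₂).integral_eq_sub_of_ae_hasDerivAt
    (by filter_upwards [hx.ae_hasDerivAt_mVar hbal] with s hs hmem
          using hs ((le_inf h₁ h₂).trans hmem.1))
  rw [intervalIntegral.integral_const_mul] at hftc
  linarith

theorem IsLinSol.intervalIntegrable_dirichletEnergy (hN : N ≠ 0) (hx : IsLinSol a x)
    (hbal : ∀ᵐ t, 0 ≤ t → IsBalanced fun i j => a i j t) {t₁ t₂ : ℝ} (h₁ : 0 ≤ t₁)
    (h₂ : 0 ≤ t₂) :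
    IntervalIntegrable (fun s => dirichletEnergy (fun i j => a i j s) fun i => x i s)
      volume t₁ t₂ := by
  have hint := (hx.absolutelyContinuousOnInterval_mVar h₁ h₂).intervalIntegrable_of_ae_hasDerivAt
    (by filter_upwards [hx.ae_hasDerivAt_mVar hbal] with s hs hmem
          using hs ((le_inf h₁ h₂).trans hmem.1))
  have hN' : (N : ℝ) ≠ 0 := Nat.cast_ne_zero.2 hN
  convert hint.const_mul (-(N : ℝ) ^ 2) using 2 with s
  field_simp

theorem IsLinSol.mVar_antitoneOn (hx : IsLinSol a x) (ha : ValidSignal N a)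
    (hbal : ∀ᵐ t, 0 ≤ t → IsBalanced fun i j => a i j t) :
    AntitoneOn (fun t => mVar fun i => x i t) (Ici 0) := by
  intro s hs u hu hsu
  have hint : 0 ≤ ∫ r in s..u, dirichletEnergy (fun i j => a i j r) fun i => x i r :=
    intervalIntegral.integral_nonneg hsu fun r hr =>
      dirichletEnergy_nonneg (fun i j => ((ha i j).2 r (le_trans hs hr.1)).1) _
  have hdiff := hx.mVar_sub_mVar hbal hs hu
  have hscaled := mul_nonneg (sq_nonneg (N : ℝ)⁻¹) hint
  beta_reduce
  linarith

theorem IsLinSol.mVar_pos (hN : N ≠ 0) (hx : IsLinSol a x) (ha : ValidSignal N a)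
    (hbal : ∀ᵐ t, 0 ≤ t → IsBalanced fun i j => a i j t) (h0 : 0 < mVar fun i => x i 0) :
    ∀ t, 0 ≤ t → 0 < mVar fun i => x i t := by
  refine pos_of_pos_of_step (V := fun t => mVar fun i => x i t) (δ := 8⁻¹) (by norm_num) h0
    fun s hs hVs u hu => ?_
  have hu0 : 0 ≤ u := hs.trans hu.1
  have hbound : ∫ r in s..u, dirichletEnergy (fun i j => a i j r) (fun i => x i r) ≤
      ∫ _ in s..u, 4 * N ^ 2 * mVar fun i => x i s := by
    refine intervalIntegral.integral_mono_on hu.1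
      (hx.intervalIntegrable_dirichletEnergy hN hbal hs hu0) intervalIntegrable_const
      fun r hr => (dirichletEnergy_le_four_mul_mVar (fun i j => ((ha i j).2 r (hs.trans hr.1)).2)
        _).trans ?_
    gcongr
    exact hx.mVar_antitoneOn ha hbal hs (hs.trans hr.1) hr.1
  rw [intervalIntegral.integral_const, smul_eq_mul] at hbound
  have hdiff := hx.mVar_sub_mVar hbal hs hu0
  have hcancel : (N : ℝ)⁻¹ ^ 2 * ((u - s) * (4 * N ^ 2 * mVar fun i => x i s)) =
      4 * (u - s) * mVar fun i => x i s := by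
    field_simp
  have hscaled := mul_le_mul_of_nonneg_left hbound (sq_nonneg (N : ℝ)⁻¹)
  have hstep := hu.2
  nlinarith

theorem IsLinSol.eq_of_ae_dirichletEnergy_eq_zero (hx : IsLinSol a x)
    (ha : ∀ i j s, 0 ≤ s → 0 ≤ a i j s) {t₁ t₂ : ℝ} (h₁ : 0 ≤ t₁) (h₁₂ : t₁ ≤ t₂)
    (hD : ∀ᵐ s ∂volume.restrict (Ioc t₁ t₂),
      dirichletEnergy (fun i j => a i j s) (fun i => x i s) = 0)
    (i : Fin N) : ∀ s ∈ Icc t₁ t₂, x i s = x i t₁ := by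
  obtain ⟨K, hK⟩ := hx.1 i (t₂ + 1) (by linarith)
  have hac : AbsolutelyContinuousOnInterval (x i) t₁ t₂ :=
    LipschitzOnWith.absolutelyContinuousOnInterval
      (hK.mono (uIcc_subset_Icc ⟨h₁, by linarith⟩ ⟨h₁.trans h₁₂, by linarith⟩))
  have hne : ∀ᵐ s : ℝ, s ≠ t₁ := compl_mem_ae_iff.2 (measure_singleton t₁)
  obtain ⟨C, hC⟩ := hac.const_of_ae_hasDerivAt_zero <| by
    filter_upwards [hx.2, (ae_restrict_iff' measurableSet_Ioc).1 hD, hne]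
      with s hderiv hDs hs hmem
    rw [uIcc_of_le h₁₂] at hmem
    have hs0 : 0 ≤ s := h₁.trans hmem.1
    have hzero := smul_sub_eq_zero_of_dirichletEnergy_eq_zero (fun i j => ha i j s hs0)
      (hDs ⟨lt_of_le_of_ne hmem.1 hs.symm, hmem.2⟩) i
    simpa [hzero] using hderiv hs0 i
  intro s hs
  rw [hC s (by rwa [uIcc_of_le h₁₂]), hC t₁ left_mem_uIcc]

theorem IsLinSol.integral_dirichletEnergy_pos (hN : N ≠ 0) (hx : IsLinSol a x) {τ μ : ℝ}
    (ha : ConnectivityPersistent N d τ μ a) (hτ : 0 < τ) (hμ : 0 < μ) {t : ℝ} (ht : 0 ≤ t)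
    (hVt : 0 < mVar fun i => x i t) :
    0 < ∫ s in t..t + τ, dirichletEnergy (fun i j => a i j s) fun i => x i s := by
  obtain ⟨hvalid, hbal, hlam⟩ := ha
  have ha0 : ∀ i j s, 0 ≤ s → 0 ≤ a i j s := fun i j s hs => ((hvalid i j).2 s hs).1
  have htτ : t ≤ t + τ := by linarith
  have hnonneg : ∀ s ∈ Ioc t (t + τ), 0 ≤ dirichletEnergy (fun i j => a i j s) fun i => x i s :=
    fun s hs => dirichletEnergy_nonneg (fun i j => ha0 i j s (ht.trans hs.1.le)) _
  refine (intervalIntegral.integral_nonneg htτ fun s hs => dirichletEnergy_nonneg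
    (fun i j => ha0 i j s (ht.trans hs.1)) _).lt_of_ne' fun hzero => ?_
  have hD := (intervalIntegral.integral_eq_zero_iff_of_le_of_nonneg_ae htτ
    (ae_restrict_of_forall_mem measurableSet_Ioc hnonneg)
    (hx.intervalIntegrable_dirichletEnergy hN hbal ht (ht.trans htτ))).1 hzero
  have hfrozen := hx.eq_of_ae_dirichletEnergy_eq_zero ha0 ht htτ hD
  have hDt : ∀ᵐ s ∂volume.restrict (Ioc t (t + τ)),
      dirichletEnergy (fun i j => a i j s) (fun i => x i t) = 0 := by
    filter_upwards [hD, ae_restrict_mem measurableSet_Ioc] with s hs hmem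
    have hxs : (fun i => x i t) = fun i => x i s :=
      funext fun i => (hfrozen i s (Ioc_subset_Icc_self hmem)).symm
    rw [hxs]
    exact hs
  have := lambda2_nonpos_of_dirichletEnergy_eq_zero hVt
    (dirichletEnergy_const_mul_integral_eq_zero τ⁻¹ htτ
      (fun i j s hs => ha0 i j s (ht.trans hs.1.le)) hDt)
  linarith [hlam t ht]

end Dynamics

/-- strict variance decay under connectivity persistence: if the initial
variance is positive, the variance decreases strictly over every window of length `τ`. -/
theorem strict_variance_decay_connectivity {N d : ℕ} (hN : 1 ≤ N)
    (τ μ : ℝ) (hτ : 0 < τ) (hμ : μ ∈ Set.Ioc (0 : ℝ) 1)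
    (a : Fin N → Fin N → ℝ → ℝ) (ha : ConnectivityPersistent N d τ μ a)
    (x : Fin N → ℝ → EuclideanSpace ℝ (Fin d)) (hx : IsLinSol a x)
    (hV0 : 0 < mVar (fun i => x i 0)) :
    ∀ t : ℝ, 0 ≤ t → mVar (fun i => x i (t + τ)) < mVar (fun i => x i t) := by
  have hN0 : N ≠ 0 := Nat.one_le_iff_ne_zero.1 hN
  intro t ht
  have hVt := hx.mVar_pos hN0 ha.1 ha.2.1 hV0 t ht
  have hdissipation := hx.integral_dirichletEnergy_pos hN0 ha hτ hμ.1 ht hVt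
  have hdiff := hx.mVar_sub_mVar ha.2.1 ht (by linarith : 0 ≤ t + τ)
  have hN2 : 0 < (N : ℝ)⁻¹ ^ 2 := by positivity
  nlinarith
end
end

section
/- Let x(·) be a solution of the linear balanced multiagent system driven by a signal A(·), let t ≥ 0, τ > 0, μ ∈ (0,1], and suppose that all positions are constant on [t, t+τ] and that the algebraic connectivity of the averaged matrix satisfies λ₂((1/τ)∫_t^{t+τ} A(s) ds) ≥ μ. Then V(x(t+τ)) ≤ (1 − τμ) V(x(t)). -/
open MeasureTheory Finset

noncomputable section

/-! On a window where every agent is stationary the velocities vanish, and for a balanced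
matrix `∑ a_ij |y_i - y_j|² = -2 ∑ ⟪ẏ_i, y_i⟫`, so the dissipation vanishes almost everywhere
on the window. Integrating, the quadratic form of the averaged matrix vanishes at the
stationary configuration; positive algebraic connectivity then forces its variance to be `0`,
and both sides of the inequality are `0`. -/

open scoped RealInnerProductSpace

variable {N : ℕ}

theorem IsBalanced.sum_sum_mul_sub_eq_zero {A : Fin N → Fin N → ℝ} (hA : IsBalanced A)
    (f : Fin N → ℝ) : ∑ i, ∑ j, A i j * (f j - f i) = 0 := by
  have hout : ∑ i, ∑ j, A i j * f j = ∑ i, ∑ j, A i j * f i := by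
    rw [sum_comm]
    refine sum_congr rfl fun j _ => ?_
    rw [← sum_mul, ← sum_mul, hA j]
  simp only [mul_sub, sum_sub_distrib, hout, sub_self]

theorem IsBalanced.sum_sum_mul_norm_sub_sq {E : Type*} [NormedAddCommGroup E]
    [InnerProductSpace ℝ E] {A : Fin N → Fin N → ℝ} (hA : IsBalanced A) (y : Fin N → E) :
    ∑ i, ∑ j, A i j * ‖y i - y j‖ ^ 2 = -2 * ∑ i, ⟪∑ j, A i j • (y j - y i), y i⟫ := by
  have hterm : ∀ i j, A i j * ‖y i - y j‖ ^ 2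
      = A i j * (‖y j‖ ^ 2 - ‖y i‖ ^ 2) - 2 * (A i j * ⟪y j - y i, y i⟫) := by
    intro i j
    have h := norm_add_sq_real (y j - y i) (y i)
    rw [sub_add_cancel] at h
    rw [norm_sub_rev]
    linear_combination (-A i j) * h
  have hbal := hA.sum_sum_mul_sub_eq_zero fun k => ‖y k‖ ^ 2
  simp only [hterm, sum_sub_distrib, ← mul_sum, hbal, sum_inner, real_inner_smul_left]
  ring

theorem ValidSignal.intervalIntegrable {a : Fin N → Fin N → ℝ → ℝ} (ha : ValidSignal N a)
    {t u : ℝ} (ht : 0 ≤ t) (hu : 0 ≤ u) (i j : Fin N) :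
    IntervalIntegrable (a i j) volume t u := by
  rw [intervalIntegrable_iff]
  refine Measure.integrableOn_of_bounded (M := 1) measure_Ioc_lt_top.ne
    (ha i j).1.aestronglyMeasurable ?_
  rw [ae_restrict_iff' measurableSet_uIoc]
  refine ae_of_all _ fun s hs => ?_
  obtain ⟨h0, h1⟩ := (ha i j).2 s ((le_min ht hu).trans (Set.uIoc_subset_uIcc hs).1)
  rw [Real.norm_eq_abs, abs_le]
  constructor <;> linarith

theorem sum_sum_integral_mul_eq_zero_of_ae {ι : Type*} [Fintype ι] {f : ι → ι → ℝ → ℝ}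
    {c : ι → ι → ℝ} {t u : ℝ} (htu : t ≤ u)
    (hf : ∀ i j, IntervalIntegrable (f i j) volume t u)
    (h0 : ∀ᵐ s ∂volume, s ∈ Set.Ioo t u → ∑ i, ∑ j, f i j s * c i j = 0) :
    ∑ i, ∑ j, (∫ s in t..u, f i j s) * c i j = 0 := by
  have hrow : ∀ i, IntervalIntegrable (fun s => ∑ j, f i j s * c i j) volume t u := fun i => by
    simpa only [← sum_fn] using IntervalIntegrable.sum univ fun j _ => (hf i j).mul_const (c i j)
  have hlin : ∫ s in t..u, ∑ i, ∑ j, f i j s * c i j = ∑ i, ∑ j, (∫ s in t..u, f i j s) * c i j := by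
    rw [intervalIntegral.integral_finsetSum fun i _ => hrow i]
    refine sum_congr rfl fun i _ => ?_
    rw [intervalIntegral.integral_finsetSum fun j _ => (hf i j).mul_const _]
    simp only [intervalIntegral.integral_mul_const]
  rw [← hlin, intervalIntegral.integral_of_le htu, integral_Ioc_eq_integral_Ioo]
  exact integral_eq_zero_of_ae ((ae_restrict_iff' measurableSet_Ioo).mpr h0)

theorem IsLinSol.ae_sum_smul_sub_eq_zero_of_stationary {d : ℕ} {a : Fin N → Fin N → ℝ → ℝ}
    {x : Fin N → ℝ → EuclideanSpace ℝ (Fin d)} (hx : IsLinSol a x) {t u : ℝ} (ht : 0 ≤ t)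
    (hstat : ∀ i, ∀ s ∈ Set.Icc t u, x i s = x i t) :
    ∀ᵐ s ∂volume, s ∈ Set.Ioo t u → ∀ i, ∑ j, a i j s • (x j t - x i t) = 0 := by
  filter_upwards [hx.2] with s hderiv hs i
  have hmem : s ∈ Set.Icc t u := Set.Ioo_subset_Icc_self hs
  have hconst : HasDerivAt (x i) 0 s := by
    have hloc : x i =ᶠ[nhds s] fun _ => x i t := Filter.eventually_of_mem
      (Ioo_mem_nhds hs.1 hs.2) fun r hr => hstat i r (Set.Ioo_subset_Icc_self hr)
    exact (hasDerivAt_const s (x i t)).congr_of_eventuallyEq hloc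
  have hzero := (hderiv (ht.trans hs.1.le) i).unique hconst
  simp only [fun k => hstat k s hmem] at hzero
  exact (smul_eq_zero.mp hzero).resolve_left (inv_ne_zero (Nat.cast_ne_zero.mpr i.pos.ne'))

theorem mVar_nonneg {d : ℕ} (y : Fin N → EuclideanSpace ℝ (Fin d)) : 0 ≤ mVar y := by
  unfold mVar
  positivity

theorem mVar_eq_zero_of_lambda2_pos {d : ℕ} {A : Fin N → Fin N → ℝ} (hA : 0 < lambda2 d A)
    {y : Fin N → EuclideanSpace ℝ (Fin d)} (hy : ∑ i, ∑ j, A i j * ‖y i - y j‖ ^ 2 = 0) :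
    mVar y = 0 := by
  refine le_antisymm ?_ (mVar_nonneg y)
  by_contra! hV
  refine hA.not_ge (Real.sSup_nonpos fun lam hlam => ?_)
  have hlamy := hlam y
  rw [hy, mul_zero] at hlamy
  exact nonpos_of_mul_nonpos_left hlamy hV

theorem stationary_window_variance_contraction_general {N d : ℕ}
    (a : Fin N → Fin N → ℝ → ℝ) (ha : ValidSignal N a)
    (hbal : ∀ᵐ s ∂(volume : Measure ℝ), 0 ≤ s → IsBalanced (fun i j => a i j s))
    (x : Fin N → ℝ → EuclideanSpace ℝ (Fin d)) (hx : IsLinSol a x)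
    (t τ μ : ℝ) (ht : 0 ≤ t) (hτ : 0 < τ) (hμ : μ ∈ Set.Ioc (0 : ℝ) 1)
    (hstat : ∀ i : Fin N, ∀ s ∈ Set.Icc t (t + τ), x i s = x i t)
    (hlam : μ ≤ lambda2 d (fun i j => τ⁻¹ * ∫ s in t..t + τ, a i j s)) :
    mVar (fun i => x i (t + τ)) ≤ (1 - τ * μ) * mVar (fun i => x i t) := by
  set y : Fin N → EuclideanSpace ℝ (Fin d) := fun i => x i t
  have hend : (fun i => x i (t + τ)) = y := funext fun i => hstat i _ ⟨by linarith, le_rfl⟩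
  have hdissip : ∀ᵐ s ∂volume, s ∈ Set.Ioo t (t + τ) →
      ∑ i, ∑ j, a i j s * ‖y i - y j‖ ^ 2 = 0 := by
    filter_upwards [hbal, hx.ae_sum_smul_sub_eq_zero_of_stationary ht hstat] with s hbs hs hmem
    have hvel : ∀ i, ∑ j, a i j s • (y j - y i) = 0 := hs hmem
    rw [(hbs (ht.trans hmem.1.le)).sum_sum_mul_norm_sub_sq]
    simp [hvel]
  have hwindow : ∑ i, ∑ j, (τ⁻¹ * ∫ s in t..t + τ, a i j s) * ‖y i - y j‖ ^ 2 = 0 := by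
    simp_rw [mul_assoc, ← mul_sum]
    rw [sum_sum_integral_mul_eq_zero_of_ae (by linarith)
      (ha.intervalIntegrable ht (by linarith)) hdissip, mul_zero]
  rw [hend, mVar_eq_zero_of_lambda2_pos (hμ.1.trans_le hlam) hwindow, mul_zero]

/-- if all agents of a solution of the linear balanced system are stationary
on `[t, t+τ]` and the averaged matrix over this window has algebraic connectivity at least
`μ`, then `V(x(t+τ)) ≤ (1 − τμ) V(x(t))`. -/
theorem stationary_window_variance_contraction {N d : ℕ} (hN : 1 ≤ N)
    (a : Fin N → Fin N → ℝ → ℝ) (ha : ValidSignal N a)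
    (hbal : ∀ᵐ s ∂(volume : Measure ℝ), 0 ≤ s → IsBalanced (fun i j => a i j s))
    (x : Fin N → ℝ → EuclideanSpace ℝ (Fin d)) (hx : IsLinSol a x)
    (t τ μ : ℝ) (ht : 0 ≤ t) (hτ : 0 < τ) (hμ : μ ∈ Set.Ioc (0 : ℝ) 1)
    (hstat : ∀ i : Fin N, ∀ s ∈ Set.Icc t (t + τ), x i s = x i t)
    (hlam : μ ≤ lambda2 d (fun i j => τ⁻¹ * ∫ s in t..t + τ, a i j s)) :
    mVar (fun i => x i (t + τ)) ≤ (1 - τ * μ) * mVar (fun i => x i t) :=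
  stationary_window_variance_contraction_general a ha hbal x hx t τ μ ht hτ hμ hstat hlam
end
end
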